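/- Let n ≥ 2, let Γ, Λ ⊆ ℝⁿ and let T : ℝⁿ → ℝⁿ be an invertible continuous linear map with adjoint T* (with respect to the Euclidean inner product). Then (Γ, Λ) is a Heisenberg uniqueness pair if and only if (T⁻¹(Γ), T*(Λ)) is a Heisenberg uniqueness pair, where T⁻¹(Γ) is the preimage of Γ under T and T*(Λ) is the image of Λ under T*. -/

import Mathlib

open MeasureTheory

/-- The `(n-1)`-dimensional Hausdorff measure restricted to `Γ ⊆ ℝⁿ`. -/
noncomputable def surfMeasure (n : ℕ) (Γ : Set (EuclideanSpace ℝ (Fin n))) :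
    Measure (EuclideanSpace ℝ (Fin n)) :=
  (μH[(n : ℝ) - 1]).restrict Γ

/-- `(Γ, Λ)` is a Heisenberg uniqueness pair. -/
def IsHUP (n : ℕ) (Γ Λ : Set (EuclideanSpace ℝ (Fin n))) : Prop :=
  ∀ f : EuclideanSpace ℝ (Fin n) → ℂ,
    Integrable f (surfMeasure n Γ) →
    (∀ ξ ∈ Λ, ∫ x, Complex.exp (-Complex.I * ((inner ℝ ξ x : ℝ) : ℂ)) * f x
        ∂(surfMeasure n Γ) = 0) →
    f =ᵐ[surfMeasure n Γ] 0

/-!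
The substitution `x ↦ T x` turns the Fourier transform of `f · H_{T⁻¹Γ}` at `T* ξ` into the
Fourier transform at `ξ` of `f ∘ T⁻¹` against the pushforward of `H_{T⁻¹Γ}` under `T`. As `T` is
bi-Lipschitz, this pushforward and `H_Γ` are each bounded by a constant multiple of the other.
Such measures have the same uniqueness sets: on a set where both are σ-finite, a Radon–Nikodym
density converts an integrable function for one measure into one for the other with the same
Fourier transform and the same null set. Hausdorff measures are not σ-finite, but an integrable
function lives on a σ-finite set.
-/

open Measure Set
open scoped ENNReal NNReal

section Hausdorff

variable {X Y : Type*} [EMetricSpace X] [EMetricSpace Y] [MeasurableSpace X] [BorelSpace X]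
  [MeasurableSpace Y] [BorelSpace Y] {f : X → Y} {K : ℝ≥0} {d : ℝ}

theorem AntilipschitzWith.map_hausdorffMeasure_le_smul (hf : AntilipschitzWith K f)
    (hmeas : Measurable f) (hd : 0 ≤ d) : (μH[d]).map f ≤ (K ^ d) • μH[d] := by
  refine Measure.le_iff.2 fun A hA => ?_
  rw [Measure.smul_apply, map_apply hmeas hA, ENNReal.smul_def, smul_eq_mul,
    ENNReal.coe_rpow_of_nonneg K hd]
  exact hf.hausdorffMeasure_preimage_le hd A

theorem LipschitzWith.hausdorffMeasure_le_smul_map (hf : LipschitzWith K f)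
    (hmeas : Measurable f) (hsurj : Function.Surjective f) (hd : 0 ≤ d) :
    μH[d] ≤ (K ^ d) • (μH[d]).map f := by
  refine Measure.le_iff.2 fun A hA => ?_
  rw [Measure.smul_apply, map_apply hmeas hA, ENNReal.smul_def, smul_eq_mul,
    ENNReal.coe_rpow_of_nonneg K hd]
  simpa only [image_preimage_eq A hsurj] using hf.hausdorffMeasure_image_le hd (f ⁻¹' A)

end Hausdorff

section Transfer

variable {α : Type*} [MeasurableSpace α] {μ ν : Measure α}

/-- The witness is `g = 𝟙_S (dν/dμ) f`, where `ν` is σ-finite on `S` and `f = 0` off `S`. -/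
theorem MeasureTheory.Integrable.exists_integrable_integral_mul_eq {c : ℝ≥0} (hμν : μ ≤ c • ν)
    (hνμ : ν ≪ μ) {f : α → ℂ} (hf : Integrable f ν) :
    ∃ g : α → ℂ, Integrable g μ ∧ (∀ h : α → ℂ, ∫ x, h x * g x ∂μ = ∫ x, h x * f x ∂ν) ∧
      (g =ᵐ[μ] 0 → f =ᵐ[ν] 0) := by
  have hfin := hf.aefinStronglyMeasurable
  set S := hfin.sigmaFiniteSet
  have hS : MeasurableSet S := hfin.measurableSet
  have hf_compl : f =ᵐ[ν.restrict Sᶜ] 0 := hfin.ae_eq_zero_compl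
  have : SigmaFinite (μ.restrict S) :=
    sigmaFinite_of_le (c • ν.restrict S)
      ((restrict_mono_measure hμν S).trans_eq (restrict_smul _ _ S))
  have hac : ν.restrict S ≪ μ.restrict S := hνμ.restrict S
  set ρ := (ν.restrict S).rnDeriv (μ.restrict S)
  refine ⟨S.indicator fun x => (ρ x).toReal • f x, ?_, fun h => ?_, fun hg => ?_⟩
  · rw [integrable_indicator_iff hS]
    exact (integrable_rnDeriv_smul_iff hac).2 hf.restrict
  · simp_rw [← indicator_mul_right, integral_indicator hS, mul_smul_comm]
    rw [integral_rnDeriv_smul hac, setIntegral_eq_integral_of_ae_compl_eq_zero]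
    rw [Filter.EventuallyEq, ae_restrict_iff' hS.compl] at hf_compl
    filter_upwards [hf_compl] with x hx hxS
    simp [hx hxS]
  · have hg : ∀ᵐ x ∂ν.restrict S, (ρ x).toReal • f x = 0 := by
      refine hac.ae_le ((ae_restrict_iff' hS).2 ?_)
      filter_upwards [hg] with x hx hxS
      simpa [indicator_of_mem hxS] using hx
    have hfS : f =ᵐ[ν.restrict S] 0 := by
      filter_upwards [hg, rnDeriv_pos hac, hac.ae_le (rnDeriv_lt_top (ν.restrict S) (μ.restrict S))]
        with x hx hpos hlt
      exact (smul_eq_zero.1 hx).resolve_left (ENNReal.toReal_pos hpos.ne' hlt.ne).ne'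
    exact ae_of_ae_restrict_of_ae_restrict_compl S hfS hf_compl

end Transfer

section FourierUniqueness

variable {E F : Type*} [NormedAddCommGroup E] [InnerProductSpace ℝ E] [MeasurableSpace E]
  [NormedAddCommGroup F] [InnerProductSpace ℝ F] [MeasurableSpace F]

def IsFourierUniquenessSet (μ : Measure E) (Λ : Set E) : Prop :=
  ∀ f : E → ℂ, Integrable f μ →
    (∀ ξ ∈ Λ, ∫ x, Complex.exp (-Complex.I * ((inner ℝ ξ x : ℝ) : ℂ)) * f x ∂μ = 0) →
    f =ᵐ[μ] 0

theorem isHUP_iff_isFourierUniquenessSet (n : ℕ) (Γ Λ : Set (EuclideanSpace ℝ (Fin n))) :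
    IsHUP n Γ Λ ↔ IsFourierUniquenessSet (surfMeasure n Γ) Λ :=
  Iff.rfl

theorem isFourierUniquenessSet_map_iff [CompleteSpace E] [CompleteSpace F] [BorelSpace E]
    [BorelSpace F] (T : E ≃L[ℝ] F) (μ : Measure E) (Λ : Set F) :
    IsFourierUniquenessSet (μ.map T) Λ ↔
      IsFourierUniquenessSet μ (ContinuousLinearMap.adjoint (T : E →L[ℝ] F) '' Λ) := by
  have hT : MeasurableEmbedding T := T.toHomeomorph.measurableEmbedding
  refine (T.toHomeomorph.toEquiv.symm.arrowCongr (Equiv.refl ℂ)).forall_congr fun g => ?_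
  change _ ↔ (Integrable (g ∘ T) μ → _ → g ∘ T =ᵐ[μ] 0)
  rw [hT.integrable_map_iff, forall_mem_image]
  refine imp_congr_right fun _ => imp_congr ?_ ?_
  · refine forall₂_congr fun ξ _ => ?_
    rw [hT.integral_map]
    simp [ContinuousLinearMap.adjoint_inner_left]
  · exact hT.ae_map_iff

theorem IsFourierUniquenessSet.of_le_smul {μ ν : Measure E} {Λ : Set E} {c : ℝ≥0}
    (hμν : μ ≤ c • ν) (hνμ : ν ≪ μ) (h : IsFourierUniquenessSet μ Λ) :
    IsFourierUniquenessSet ν Λ := by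
  intro f hf hvan
  obtain ⟨g, hg, hgf, hg0⟩ := hf.exists_integrable_integral_mul_eq hμν hνμ
  exact hg0 (h g hg fun ξ hξ => (hgf _).trans (hvan ξ hξ))

theorem isFourierUniquenessSet_iff_of_le_smul {μ ν : Measure E} {Λ : Set E} {c c' : ℝ≥0}
    (hμν : μ ≤ c • ν) (hνμ : ν ≤ c' • μ) :
    IsFourierUniquenessSet μ Λ ↔ IsFourierUniquenessSet ν Λ :=
  ⟨.of_le_smul hμν (absolutelyContinuous_of_le_smul hνμ),
    .of_le_smul hνμ (absolutelyContinuous_of_le_smul hμν)⟩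

end FourierUniqueness

/-- Invariance of Heisenberg uniqueness pairs under an invertible continuous linear
map `T` and the image of `Λ` under its adjoint. -/
theorem isHUP_linear_map_iff (n : ℕ) (hn : 2 ≤ n)
    (Γ Λ : Set (EuclideanSpace ℝ (Fin n)))
    (T : EuclideanSpace ℝ (Fin n) ≃L[ℝ] EuclideanSpace ℝ (Fin n)) :
    IsHUP n Γ Λ ↔
      IsHUP n ((T : EuclideanSpace ℝ (Fin n) → EuclideanSpace ℝ (Fin n)) ⁻¹' Γ)
        (⇑(ContinuousLinearMap.adjoint
            (T : EuclideanSpace ℝ (Fin n) →L[ℝ] EuclideanSpace ℝ (Fin n))) '' Λ) := by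
  have hd : (0 : ℝ) ≤ n - 1 := sub_nonneg.2 (by exact_mod_cast one_le_two.trans hn)
  have hT : MeasurableEmbedding T := T.toHomeomorph.measurableEmbedding
  have hle := T.lipschitz.hausdorffMeasure_le_smul_map hT.measurable T.surjective hd
  have hge := T.antilipschitz.map_hausdorffMeasure_le_smul hT.measurable hd
  rw [isHUP_iff_isFourierUniquenessSet, isHUP_iff_isFourierUniquenessSet,
    ← isFourierUniquenessSet_map_iff, surfMeasure, surfMeasure, ← hT.restrict_map]
  exact isFourierUniquenessSet_iff_of_le_smul
    ((restrict_mono_measure hle Γ).trans_eq (restrict_smul _ _ Γ))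
    ((restrict_mono_measure hge Γ).trans_eq (restrict_smul _ _ Γ))
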